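/- arXiv:1402.2620 — 4 statements merged into one kernel-verified Lean document; each statement's English description precedes it below -/
import Mathlib

section
/- Let H₁ = {h : [0,∞) → ℝ : h(t) = ∫₀^t h'(s) ds for some h' ∈ L²([0,∞))} with inner product ⟨h, g⟩ = ∫₀^∞ h'(s) g'(s) ds, and let V₁ = {h ∈ H₁ : h' is nonincreasing}. If h ∈ H₁ satisfies ⟨h, v⟩ ≤ 0 for every v ∈ V₁, then h(t) ≤ 0 for every t ≥ 0. -/
open MeasureTheory Set intervalIntegral

/-! Pairing `h` with the indicator of `[0, t]`, which is square integrable and nonincreasing,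
gives `h t`; the polar cone condition then says `h t ≤ 0`. -/

theorem antitone_indicator_Iic_one (t : ℝ) : Antitone ((Iic t).indicator (1 : ℝ → ℝ)) := by
  intro x y hxy
  by_cases hy : y ≤ t
  · simp [indicator_of_mem, hy, hxy.trans hy]
  · simp only [indicator_of_notMem (show y ∉ Iic t from hy)]
    exact indicator_nonneg (fun _ _ => zero_le_one) x

theorem memLp_indicator_Iic_one_restrict_Ici (p : ENNReal) (a t : ℝ) :
    MemLp ((Iic t).indicator (1 : ℝ → ℝ)) p (volume.restrict (Ici a)) := by
  refine memLp_indicator_const p measurableSet_Iic 1 (Or.inr ?_)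
  rw [Measure.restrict_apply measurableSet_Iic, inter_comm, Ici_inter_Iic, Real.volume_Icc]
  exact ENNReal.ofReal_ne_top

theorem setIntegral_Ici_mul_indicator_Iic_one {a t : ℝ} (hat : a ≤ t) (f : ℝ → ℝ) :
    ∫ s in Ici a, f s * (Iic t).indicator 1 s = ∫ s in a..t, f s := by
  have hmul : (fun s => f s * (Iic t).indicator 1 s) = (Iic t).indicator f := by
    ext s
    by_cases hs : s ∈ Iic t <;> simp [hs]
  rw [hmul, setIntegral_indicator measurableSet_Iic, Ici_inter_Iic, integral_of_le hat,
    integral_Icc_eq_integral_Ioc]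

theorem polar_cone_nonpositive_general
    (h' : ℝ → ℝ)
    (h : ℝ → ℝ) (hdef : ∀ t, h t = ∫ s in (0:ℝ)..t, h' s)
    (hpolar : ∀ v' : ℝ → ℝ, MemLp v' 2 (volume.restrict (Ici 0)) →
      AntitoneOn v' (Ici 0) → (∫ s in Ici (0:ℝ), h' s * v' s) ≤ 0) :
    ∀ t, 0 ≤ t → h t ≤ 0 := by
  intro t ht
  have hpair := hpolar _ (memLp_indicator_Iic_one_restrict_Ici 2 0 t)
    ((antitone_indicator_Iic_one t).antitoneOn _)
  rwa [setIntegral_Ici_mul_indicator_Iic_one ht, ← hdef] at hpair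

/-- If `h` is in the Cameron–Martin space of the Wiener process (i.e. `h` is the
indefinite integral of a square-integrable `h'`) and `h` lies in the polar cone of
`V₁` (the cone of elements whose derivative is nonincreasing), then `h ≤ 0`. -/
theorem polar_cone_nonpositive
    (h' : ℝ → ℝ) (hL2 : MemLp h' 2 (volume.restrict (Ici 0)))
    (h : ℝ → ℝ) (hdef : ∀ t, h t = ∫ s in (0:ℝ)..t, h' s)
    (hpolar : ∀ v' : ℝ → ℝ, MemLp v' 2 (volume.restrict (Ici 0)) →
      AntitoneOn v' (Ici 0) → (∫ s in Ici (0:ℝ), h' s * v' s) ≤ 0) :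
    ∀ t, 0 ≤ t → h t ≤ 0 :=
  polar_cone_nonpositive_general h' h hdef hpolar
end

section
/- Let u, φ' : [0,∞) → ℝ with u nonincreasing, nonnegative, u(t) → 0 as t → ∞, φ' ∈ L²([0,∞)), u ∈ L²([0,∞)), and suppose φ(t) = ∫₀^t φ'(s) ds ≥ 0 for all t. Then ∫₀^∞ u(s) φ'(s) ds ≥ 0. -/
/-!
Layer cake: `u s = ∫_{l > 0} 𝟙[l < u s] dl`, so by Fubini
`∫₀^∞ u φ' = ∫_{l > 0} (∫_{u > l} φ') dl`. As `u` is nonincreasing and tends to `0`, each superlevel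
set `{u > l} ∩ [0, ∞)` with `l > 0` is, up to a null set, an interval `[0, b]`, over which `φ'`
integrates to `φ b ≥ 0`.
-/

open MeasureTheory Set Filter
open scoped Topology

theorem ae_eq_Icc_of_Ico_subset_of_subset_Icc {α : Type*} [PartialOrder α] [MeasurableSpace α]
    {μ : Measure α} [NullSingletonClass μ] {s : Set α} {a b : α} (h₁ : Ico a b ⊆ s)
    (h₂ : s ⊆ Icc a b) : s =ᵐ[μ] Icc a b :=
  h₂.eventuallyLE.antisymm (Ico_ae_eq_Icc.symm.le.trans h₁.eventuallyLE)

theorem AntitoneOn.exists_superlevelSet_inter_Ici_ae_eq_Icc {β : Type*} [Preorder β]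
    {u : ℝ → β} {a : ℝ} {l : β} {μ : Measure ℝ} [NullSingletonClass μ]
    (hu : AntitoneOn u (Ici a)) (hbdd : BddAbove {s | l < u s}) :
    ∃ b, a ≤ b ∧ ({s | l < u s} ∩ Ici a : Set ℝ) =ᵐ[μ] Icc a b := by
  set B := {s | l < u s} ∩ Ici a
  -- `a` is inserted so that the supremum is at least `a` even when `B` is empty.
  have hB : BddAbove (insert a B) := (hbdd.mono inter_subset_left).insert a
  refine ⟨sSup (insert a B), le_csSup hB (mem_insert _ _), ae_eq_Icc_of_Ico_subset_of_subset_Icc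
    ?_ fun x hx => ⟨hx.2, le_csSup hB (mem_insert_of_mem _ hx)⟩⟩
  rintro x ⟨hax, hxb⟩
  obtain ⟨y, rfl | ⟨hly, hay⟩, hxy⟩ := exists_lt_of_lt_csSup (insert_nonempty _ _) hxb
  · exact absurd hax hxy.not_ge
  · exact ⟨hly.trans_le (hu hax hay hxy.le), hax⟩

theorem Filter.Tendsto.bddAbove_superlevelSet {u : ℝ → ℝ} {c l : ℝ}
    (hu : Tendsto u atTop (𝓝 c)) (hcl : c < l) : BddAbove {s | l < u s} := by
  obtain ⟨T, hT⟩ := eventually_atTop.1 (hu.eventually_lt_const hcl)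
  exact ⟨T, fun s hs => le_of_not_ge fun hTs => (hT s hTs).not_gt hs⟩

theorem setIntegral_superlevelSet_inter_Ici_nonneg {u f : ℝ → ℝ} {a c l : ℝ}
    (hu : AntitoneOn u (Ici a)) (hu_lim : Tendsto u atTop (𝓝 c)) (hcl : c < l)
    (hf : ∀ t, a ≤ t → 0 ≤ ∫ s in a..t, f s) :
    0 ≤ ∫ s in {s | l < u s} ∩ Ici a, f s := by
  obtain ⟨b, hab, hae⟩ := hu.exists_superlevelSet_inter_Ici_ae_eq_Icc (μ := volume)
    (hu_lim.bddAbove_superlevelSet hcl)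
  rw [setIntegral_congr_set hae, integral_Icc_eq_integral_Ioc,
    ← intervalIntegral.integral_of_le hab]
  exact hf b hab

theorem integral_Ioi_indicator_Iio_const {E : Type*} [NormedAddCommGroup E] [NormedSpace ℝ E]
    [CompleteSpace E] {c : ℝ} (hc : 0 ≤ c) (e : E) :
    ∫ l in Ioi 0, (Iio c).indicator (fun _ => e) l = c • e := by
  rw [integral_indicator_const e measurableSet_Iio, measureReal_restrict_apply measurableSet_Iio,
    Iio_inter_Ioi, Real.volume_real_Ioo_of_le hc, sub_zero]

theorem integrable_indicator_Iio_const {E : Type*} [NormedAddCommGroup E] (c : ℝ) (e : E) :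
    Integrable ((Iio c).indicator fun _ => e) (volume.restrict (Ioi 0)) := by
  refine (integrable_indicator_iff measurableSet_Iio).2 (integrableOn_const ?_)
  rw [Measure.restrict_apply measurableSet_Iio, Iio_inter_Ioi]
  exact measure_Ioo_lt_top.ne

theorem integral_mul_eq_integral_setIntegral_superlevelSet {α : Type*} [MeasurableSpace α]
    {μ : Measure α} [SigmaFinite μ] {u f : α → ℝ} (hu : Measurable u) (hu_nonneg : ∀ x, 0 ≤ u x)
    (hf : AEStronglyMeasurable f μ) (huf : Integrable (fun x => u x * f x) μ) :
    ∫ x, u x * f x ∂μ = ∫ l in Ioi 0, ∫ x in {x | l < u x}, f x ∂μ := by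
  set F : α × ℝ → ℝ := {p | p.2 < u p.1}.indicator fun p => f p.1
  have hF_left : ∀ x, (fun l => F (x, l)) = (Iio (u x)).indicator fun _ => f x := fun _ => rfl
  have hF_right : ∀ l, (fun x => F (x, l)) = {x | l < u x}.indicator f := fun _ => rfl
  have hF : Integrable F (μ.prod (volume.restrict (Ioi 0))) := by
    have hFm : AEStronglyMeasurable F (μ.prod (volume.restrict (Ioi 0))) :=
      hf.comp_fst.indicator (measurableSet_lt measurable_snd (hu.comp measurable_fst))
    refine (integrable_prod_iff hFm).2
      ⟨.of_forall fun x => ?_, huf.norm.congr (.of_forall fun x => ?_)⟩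
    · rw [hF_left]
      exact integrable_indicator_Iio_const _ _
    · show ‖u x * f x‖ = ∫ l in Ioi 0, ‖(Iio (u x)).indicator (fun _ => f x) l‖
      simp_rw [norm_indicator_eq_indicator_norm]
      rw [integral_Ioi_indicator_Iio_const (hu_nonneg x), norm_mul,
        Real.norm_of_nonneg (hu_nonneg x), smul_eq_mul]
  calc ∫ x, u x * f x ∂μ = ∫ x, (∫ l in Ioi 0, F (x, l)) ∂μ := by
        refine integral_congr_ae (.of_forall fun x => ?_)
        beta_reduce
        rw [hF_left x, integral_Ioi_indicator_Iio_const (hu_nonneg x), smul_eq_mul]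
    _ = ∫ l in Ioi 0, ∫ x, F (x, l) ∂μ := integral_integral_swap (f := fun x l => F (x, l)) hF
    _ = ∫ l in Ioi 0, ∫ x in {x | l < u x}, f x ∂μ := by
        refine integral_congr_ae (.of_forall fun l => ?_)
        beta_reduce
        rw [hF_right l]
        exact integral_indicator (hu measurableSet_Ioi)

theorem AntitoneOn.antitone_comp_max {β : Type*} [Preorder β] {u : ℝ → β} {a : ℝ}
    (hu : AntitoneOn u (Ici a)) : Antitone fun t => u (max t a) := fun _ _ hst =>
  hu (le_max_right _ a) (le_max_right _ a) (max_le_max_right a hst)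

theorem inner_product_with_nonneg_element_nonneg
    (u φ' : ℝ → ℝ)
    (hu_anti : AntitoneOn u (Ici 0))
    (hu_nonneg : ∀ t, 0 ≤ t → 0 ≤ u t)
    (hu_lim : Tendsto u atTop (nhds 0))
    (hφ'L2 : MemLp φ' 2 (volume.restrict (Ici 0)))
    (huL2 : MemLp u 2 (volume.restrict (Ici 0)))
    (φ : ℝ → ℝ) (hφdef : ∀ t, φ t = ∫ s in (0:ℝ)..t, φ' s)
    (hφ_nonneg : ∀ t, 0 ≤ t → 0 ≤ φ t) :
    0 ≤ ∫ s in Ici (0:ℝ), u s * φ' s := by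
  -- `v` agrees with `u` on `[0, ∞)` and is antitone, hence measurable, on all of `ℝ`.
  set v : ℝ → ℝ := fun t => u (max t 0)
  have hv_anti : Antitone v := hu_anti.antitone_comp_max
  have huv : EqOn u v (Ici 0) := fun t ht => by simp only [v, max_eq_left (mem_Ici.1 ht)]
  have hv_lim : Tendsto v atTop (𝓝 0) :=
    hu_lim.congr' (eventually_atTop.2 ⟨0, fun t ht => huv ht⟩)
  have hvφ' : Integrable (fun s => v s * φ' s) (volume.restrict (Ici 0)) :=
    (huL2.ae_eq ((ae_restrict_iff' measurableSet_Ici).2 (.of_forall huv))).integrable_mul hφ'L2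
  rw [setIntegral_congr_fun measurableSet_Ici fun t ht => by rw [huv ht],
    integral_mul_eq_integral_setIntegral_superlevelSet hv_anti.measurable
      (fun t => hu_nonneg _ (le_max_right t 0)) hφ'L2.aestronglyMeasurable hvφ']
  refine setIntegral_nonneg measurableSet_Ioi fun l hl => ?_
  rw [Measure.restrict_restrict (measurableSet_lt measurable_const hv_anti.measurable)]
  exact setIntegral_superlevelSet_inter_Ici_nonneg (hv_anti.antitoneOn _) hv_lim hl
    fun t ht => hφdef t ▸ hφ_nonneg t ht
end

section
/- Let h'' ∈ L²([0,∞)², λ₂), T > 0, T⃗ = (T,T), and define v''(s) = (∫_{[s, T⃗]} max(h(u), 0) du)·1_{s ≤ T⃗} where h(t) = ∫_{[0,t]} h''(u) du. Then ∫_{[0,∞)²} v''(s)² ds ≤ T⁸ ∫_{[0,∞)²} h''(s)² ds. -/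
/-!
On the square `K = [0,T]²` put `M = ∫_K |h''|`. Every rectangle `[0,u]` with `u ∈ K` lies in `K`,
so `|h| ≤ M` on `K`; every rectangle `[s,T⃗]` with `s ∈ K` lies in `K` as well, so
`|v''| ≤ M T²` on `K`, while `v''` vanishes on `[0,∞)² \ K`. Hence `∫ v''² ≤ M² T⁶`, and
Cauchy–Schwarz on `K` gives `M² ≤ T² ∫_K h''²`.
-/

open MeasureTheory Set

section SetIntegral

variable {α : Type*} [MeasurableSpace α] {μ : Measure α} {f : α → ℝ} {s t : Set α}

theorem abs_setIntegral_le_setIntegral_abs_of_subset (hst : s ⊆ t) (hf : IntegrableOn f t μ) :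
    |∫ x in s, f x ∂μ| ≤ ∫ x in t, |f x| ∂μ :=
  abs_integral_le_integral_abs.trans <|
    setIntegral_mono_set hf.abs (.of_forall fun _ => abs_nonneg _) hst.eventuallyLE

theorem abs_setIntegral_le_of_subset_of_abs_le {C : ℝ} (hC : 0 ≤ C) (hst : s ⊆ t)
    (ht : μ t ≠ ⊤) (hf : ∀ x ∈ t, |f x| ≤ C) :
    |∫ x in s, f x ∂μ| ≤ C * μ.real t := calc
  |∫ x in s, f x ∂μ| ≤ C * μ.real s :=
    norm_setIntegral_le_of_norm_le_const (f := f) (measure_mono hst |>.trans_lt ht.lt_top)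
      fun x hx => hf x (hst hx)
  _ ≤ C * μ.real t := mul_le_mul_of_nonneg_left (measureReal_mono hst ht) hC

theorem abs_setIntegral_max_zero_le_of_subset {C : ℝ} (hC : 0 ≤ C) (hst : s ⊆ t)
    (ht : μ t ≠ ⊤) (hf : ∀ x ∈ t, |f x| ≤ C) :
    |∫ x in s, max (f x) 0 ∂μ| ≤ C * μ.real t :=
  abs_setIntegral_le_of_subset_of_abs_le hC hst ht fun x hx => by
    rw [abs_of_nonneg (le_max_right _ _)]
    exact max_le ((le_abs_self _).trans (hf x hx)) hC

theorem setIntegral_sq_le_of_abs_le {C : ℝ} (hs : μ s ≠ ⊤) (hf : ∀ x ∈ s, |f x| ≤ C) :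
    ∫ x in s, f x ^ 2 ∂μ ≤ C ^ 2 * μ.real s := by
  refine (le_abs_self _).trans
    (norm_setIntegral_le_of_norm_le_const (f := fun x => f x ^ 2) hs.lt_top fun x hx => ?_)
  rw [Real.norm_eq_abs, abs_pow]
  exact pow_le_pow_left₀ (abs_nonneg _) (hf x hx) 2

theorem sq_integral_abs_le_measureReal_mul_integral_sq [IsFiniteMeasure μ] (hf : MemLp f 2 μ) :
    (∫ x, |f x| ∂μ) ^ 2 ≤ μ.real univ * ∫ x, f x ^ 2 ∂μ := by
  have holder := integral_mul_le_Lp_mul_Lq_of_nonneg Real.HolderConjugate.two_two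
    (.of_forall fun x => abs_nonneg (f x)) (.of_forall fun _ => zero_le_one)
    (by rw [ENNReal.ofReal_ofNat]; exact hf.abs) (by rw [ENNReal.ofReal_ofNat]; exact memLp_const 1)
  simp only [Real.rpow_two, one_pow, mul_one, integral_const, smul_eq_mul, sq_abs,
    ← Real.sqrt_eq_rpow] at holder
  calc (∫ x, |f x| ∂μ) ^ 2
      ≤ (√(∫ x, f x ^ 2 ∂μ) * √(μ.real univ)) ^ 2 :=
        pow_le_pow_left₀ (integral_nonneg fun _ => abs_nonneg _) holder 2
    _ = μ.real univ * ∫ x, f x ^ 2 ∂μ := by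
        rw [mul_pow, Real.sq_sqrt (integral_nonneg fun _ => sq_nonneg _),
          Real.sq_sqrt measureReal_nonneg, mul_comm]

end SetIntegral

theorem Real.volume_real_Icc_prod_Icc_of_le {a b c d : ℝ} (hab : a ≤ b) (hcd : c ≤ d) :
    volume.real (Icc a b ×ˢ Icc c d) = (b - a) * (d - c) := by
  rw [Measure.volume_eq_prod, measureReal_prod_prod, Real.volume_real_Icc_of_le hab,
    Real.volume_real_Icc_of_le hcd]

theorem vsecond_sq_integral_bound_two_param
    (h'' : ℝ × ℝ → ℝ)
    (hL2 : MemLp h'' 2 (volume.restrict (Ici (0:ℝ) ×ˢ Ici (0:ℝ))))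
    (h : ℝ × ℝ → ℝ)
    (hdef : ∀ t : ℝ × ℝ, h t = ∫ u in Icc (0:ℝ) t.1 ×ˢ Icc (0:ℝ) t.2, h'' u)
    (T : ℝ) (hT : 0 < T)
    (v'' : ℝ × ℝ → ℝ)
    (hv'' : ∀ s : ℝ × ℝ, v'' s =
      ({p : ℝ × ℝ | p.1 ≤ T ∧ p.2 ≤ T}).indicator
        (fun s => ∫ u in Icc s.1 T ×ˢ Icc s.2 T, max (h u) 0) s) :
    (∫ s in Ici (0:ℝ) ×ˢ Ici (0:ℝ), (v'' s) ^ 2) ≤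
      T ^ 8 * ∫ s in Ici (0:ℝ) ×ˢ Ici (0:ℝ), (h'' s) ^ 2 := by
  set S : Set (ℝ × ℝ) := Ici 0 ×ˢ Ici 0
  set K : Set (ℝ × ℝ) := Icc 0 T ×ˢ Icc 0 T
  have hKS : K ⊆ S := prod_mono Icc_subset_Ici_self Icc_subset_Ici_self
  have hKfin : volume K ≠ ⊤ := (isCompact_Icc.prod isCompact_Icc).measure_ne_top
  have hKvol : volume.real K = T ^ 2 := by
    rw [Real.volume_real_Icc_prod_Icc_of_le hT.le hT.le]; ring
  have hL2K : MemLp h'' 2 (volume.restrict K) := hL2.mono_measure (Measure.restrict_mono hKS le_rfl)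
  have : IsFiniteMeasure (volume.restrict K) := isFiniteMeasure_restrict.mpr hKfin
  set M := ∫ u in K, |h'' u|
  have hM : 0 ≤ M := integral_nonneg fun _ => abs_nonneg _
  have hh : ∀ u ∈ K, |h u| ≤ M := fun u ⟨hu₁, hu₂⟩ => hdef u ▸
    abs_setIntegral_le_setIntegral_abs_of_subset
      (prod_mono (Icc_subset_Icc le_rfl hu₁.2) (Icc_subset_Icc le_rfl hu₂.2))
      (hL2K.integrable one_le_two)
  have hv : ∀ s ∈ K, |v'' s| ≤ M * T ^ 2 := fun s ⟨hs₁, hs₂⟩ => by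
    have hsT : s ∈ {p : ℝ × ℝ | p.1 ≤ T ∧ p.2 ≤ T} := ⟨hs₁.2, hs₂.2⟩
    rw [hv'', indicator_of_mem hsT, ← hKvol]
    exact abs_setIntegral_max_zero_le_of_subset hM
      (prod_mono (Icc_subset_Icc hs₁.1 le_rfl) (Icc_subset_Icc hs₂.1 le_rfl)) hKfin hh
  have hv₀ : ∀ s ∈ S \ K, v'' s ^ 2 = 0 := fun s ⟨⟨hs₁, hs₂⟩, hsK⟩ => by
    rw [hv'', indicator_of_notMem fun hsT => hsK ⟨⟨hs₁, hsT.1⟩, hs₂, hsT.2⟩, zero_pow two_ne_zero]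
  have hCS : M ^ 2 ≤ T ^ 2 * ∫ s in K, h'' s ^ 2 := by
    simpa only [measureReal_restrict_apply_univ, hKvol]
      using sq_integral_abs_le_measureReal_mul_integral_sq hL2K
  calc ∫ s in S, v'' s ^ 2 = ∫ s in K, v'' s ^ 2 :=
        setIntegral_eq_of_subset_of_forall_sdiff_eq_zero
          (measurableSet_Ici.prod measurableSet_Ici) hKS hv₀
    _ ≤ (M * T ^ 2) ^ 2 * T ^ 2 := (setIntegral_sq_le_of_abs_le hKfin hv).trans_eq (by rw [hKvol])
    _ ≤ T ^ 6 * (T ^ 2 * ∫ s in K, h'' s ^ 2) := by nlinarith [pow_pos hT 6]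
    _ ≤ T ^ 8 * ∫ s in S, h'' s ^ 2 := by
        rw [← mul_assoc, ← pow_add]
        exact mul_le_mul_of_nonneg_left (setIntegral_mono_set hL2.integrable_sq
          (.of_forall fun _ => sq_nonneg _) hKS.eventuallyLE) (by positivity)
end

section
/- Let h' ∈ L²([0,∞)) with h(t) = ∫₀^t h'(s) ds, and for T > 0 let v'(s) = (∫_s^T h(u)·1_{h(u)>0} du)·1_{s≤T}. If ∫₀^∞ h'(s) v'(s) ds ≤ 0, then ∫₀^T h(u)²·1_{h(u)>0} du = 0, i.e. h(u) ≤ 0 for almost every u ∈ [0,T]. -/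
open MeasureTheory Set intervalIntegral

/-! Extending the truncated tail integral `∫_s^T g` to the square `(0, T]²` by the indicator of
`s ≤ u` and swapping the order of integration turns `∫₀^T h' (∫_s^T g)` into `∫₀^T h g` with
`g = h⁺`, that is, into `∫₀^T (h⁺)²`. This is nonnegative, so the hypothesis forces it to vanish,
and then `h⁺ = 0` almost everywhere on `[0, T]`. -/

section PositivePart

variable {α : Type*} (h : α → ℝ) (x : α)

theorem indicator_pos_self_eq_max : {y | 0 < h y}.indicator h x = max (h x) 0 := by
  rcases lt_or_ge 0 (h x) with hx | hx
  · simp [hx, hx.le]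
  · simp [hx.not_gt, hx]

theorem mul_indicator_pos_self :
    h x * {y | 0 < h y}.indicator h x = h x ^ 2 * {y | 0 < h y}.indicator 1 x := by
  by_cases hx : 0 < h x <;> simp [hx, sq]

theorem sq_mul_indicator_pos_nonneg : 0 ≤ h x ^ 2 * {y | 0 < h y}.indicator 1 x :=
  mul_nonneg (sq_nonneg _) (indicator_nonneg (fun _ _ => zero_le_one) x)

theorem sq_mul_indicator_pos_eq_zero_iff :
    h x ^ 2 * {y | 0 < h y}.indicator 1 x = 0 ↔ h x ≤ 0 := by
  rcases lt_or_ge 0 (h x) with hx | hx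
  · simp [hx, hx.ne', hx.not_ge]
  · simp [hx.not_gt, hx]

end PositivePart

theorem setIntegral_Ioc_indicator_Ici {g : ℝ → ℝ} {a b s : ℝ} (hs : s ∈ Ioc a b) :
    ∫ u in Ioc a b, (Ici s).indicator g u = ∫ u in s..b, g u := by
  rw [setIntegral_indicator measurableSet_Ici, integral_of_le hs.2,
    ← integral_Icc_eq_integral_Ioc]
  congr 2
  ext u
  simp only [mem_inter_iff, mem_Ioc, mem_Ici, mem_Icc]
  constructor
  · rintro ⟨⟨-, hub⟩, hsu⟩
    exact ⟨hsu, hub⟩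
  · rintro ⟨hsu, hub⟩
    exact ⟨⟨hs.1.trans_le hsu, hub⟩, hsu⟩

theorem setIntegral_Ioc_indicator_Iic {f : ℝ → ℝ} {a b u : ℝ} (hu : u ∈ Ioc a b) :
    ∫ s in Ioc a b, (Iic u).indicator f s = ∫ s in a..u, f s := by
  rw [setIntegral_indicator measurableSet_Iic, integral_of_le hu.1.le, Ioc_inter_Iic,
    min_eq_right hu.2]

theorem integral_mul_integral_tail_eq_integral_primitive_mul {f g : ℝ → ℝ} {a b : ℝ}
    (hab : a ≤ b) (hf : IntervalIntegrable f volume a b) (hg : IntervalIntegrable g volume a b) :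
    ∫ s in a..b, f s * ∫ u in s..b, g u = ∫ u in a..b, (∫ s in a..u, f s) * g u := by
  set K : ℝ → ℝ → ℝ := fun s u => (Iic u).indicator f s * g u
  have hK_apply : ∀ s u, f s * (Ici s).indicator g u = K s u := by
    intro s u
    by_cases hsu : s ≤ u <;> simp [K, indicator_apply, hsu]
  have hK_int : Integrable (Function.uncurry K)
      ((volume.restrict (Ioc a b)).prod (volume.restrict (Ioc a b))) := by
    have hK : Function.uncurry K
        = {p : ℝ × ℝ | p.1 ≤ p.2}.indicator (fun p => f p.1 * g p.2) := by
      ext ⟨s, u⟩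
      by_cases hsu : s ≤ u <;> simp [K, indicator_apply, hsu]
    rw [hK]
    exact (hf.1.mul_prod hg.1).indicator (measurableSet_le measurable_fst measurable_snd)
  rw [integral_of_le hab, integral_of_le hab]
  calc ∫ s in Ioc a b, f s * ∫ u in s..b, g u
      = ∫ s in Ioc a b, ∫ u in Ioc a b, K s u := by
        refine setIntegral_congr_fun measurableSet_Ioc fun s hs => ?_
        simp only [← hK_apply, MeasureTheory.integral_const_mul, setIntegral_Ioc_indicator_Ici hs]
    _ = ∫ u in Ioc a b, ∫ s in Ioc a b, K s u := integral_integral_swap hK_int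
    _ = ∫ u in Ioc a b, (∫ s in a..u, f s) * g u := by
        refine setIntegral_congr_fun measurableSet_Ioc fun u hu => ?_
        simp only [K, MeasureTheory.integral_mul_const, setIntegral_Ioc_indicator_Iic hu]

theorem setIntegral_Ici_mul_indicator_Iic {f G : ℝ → ℝ} {a b : ℝ} (hab : a ≤ b) :
    ∫ s in Ici a, f s * (Iic b).indicator G s = ∫ s in a..b, f s * G s := by
  simp only [← indicator_mul_right]
  rw [setIntegral_indicator measurableSet_Iic, Ici_inter_Iic, integral_Icc_eq_integral_Ioc,
    ← integral_of_le hab]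

theorem ae_nonpos_of_integral_sq_mul_indicator_pos_eq_zero {h : ℝ → ℝ} {a b : ℝ}
    (hab : a ≤ b) (hh : ContinuousOn h (uIcc a b))
    (hzero : ∫ u in a..b, h u ^ 2 * {x | 0 < h x}.indicator 1 u = 0) :
    ∀ᵐ u ∂(volume.restrict (Icc a b)), h u ≤ 0 := by
  have hint : IntervalIntegrable (fun u => h u ^ 2 * {x | 0 < h x}.indicator 1 u) volume a b := by
    simp only [← mul_indicator_pos_self, indicator_pos_self_eq_max]
    exact (hh.mul (hh.sup (continuousOn_const (c := 0)))).intervalIntegrable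
  have hae := (integral_eq_zero_iff_of_le_of_nonneg_ae hab
    (ae_of_all _ (sq_mul_indicator_pos_nonneg h)) hint).mp hzero
  rw [← ae_restrict_congr_set Ioc_ae_eq_Icc]
  filter_upwards [hae] with u hu
  exact (sq_mul_indicator_pos_eq_zero_iff h u).mp hu

theorem fubini_polar_step
    (h' : ℝ → ℝ) (hL2 : MemLp h' 2 (volume.restrict (Ici 0)))
    (h : ℝ → ℝ) (hdef : ∀ t, h t = ∫ s in (0:ℝ)..t, h' s)
    (T : ℝ) (hT : 0 < T)
    (v' : ℝ → ℝ)
    (hv' : ∀ s, v' s =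
      (Iic T).indicator (fun s => ∫ u in s..T, ({x | 0 < h x}).indicator h u) s)
    (hneg : (∫ s in Ici (0:ℝ), h' s * v' s) ≤ 0) :
    (∫ u in (0:ℝ)..T, (h u) ^ 2 * ({x | 0 < h x}).indicator 1 u) = 0 ∧
      ∀ᵐ u ∂(volume.restrict (Icc (0:ℝ) T)), h u ≤ 0 := by
  have hh'_int : IntegrableOn h' (uIcc 0 T) := by
    rw [uIcc_of_le hT.le]
    exact (hL2.mono_measure (Measure.restrict_mono Icc_subset_Ici_self le_rfl)).integrable
      one_le_two
  have hh_cont : ContinuousOn h (uIcc 0 T) := by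
    simpa only [← hdef] using continuousOn_primitive_interval hh'_int
  have hg_int : IntervalIntegrable ({x | 0 < h x}.indicator h) volume 0 T := by
    simp only [funext (indicator_pos_self_eq_max h)]
    exact (hh_cont.sup (continuousOn_const (c := 0))).intervalIntegrable
  have hle : ∫ u in (0:ℝ)..T, h u ^ 2 * {x | 0 < h x}.indicator 1 u ≤ 0 := by
    rw [funext hv', setIntegral_Ici_mul_indicator_Iic hT.le,
      integral_mul_integral_tail_eq_integral_primitive_mul hT.le hh'_int.intervalIntegrable
        hg_int] at hneg
    simpa only [← hdef, mul_indicator_pos_self] using hneg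
  have hzero := le_antisymm hle (integral_nonneg hT.le fun u _ => sq_mul_indicator_pos_nonneg h u)
  exact ⟨hzero, ae_nonpos_of_integral_sq_mul_indicator_pos_eq_zero hT.le hh_cont hzero⟩
end
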